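/- Local optimality implies global optimality for separable concave allocation: let G(n) = ∑_{k=1}^m w_k F_k(n_k) on Ω = { n ∈ ℕ^m | n_k ≥ 1, ∑ n_k = N }, with each w_k > 0 and each F_k strictly increasing and discretely concave. If n ∈ Ω is such that no single-agent transfer between any pair of teams strictly increases G (i.e., for all i ≠ j with n_i ≥ 2, w_j(F_j(n_j+1) − F_j(n_j)) ≤ w_i(F_i(n_i) − F_i(n_i−1))), then G(n) ≥ G(n') for all n' ∈ Ω. -/

import Mathlib

/-!
With `g k t = w k * F k t`, let `c` be the largest marginal gain `g j (n j + 1) - g j (n j)`.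
Local optimality and concavity make `c` a common supergradient: `c` is also at most every
marginal loss `g k (n k) - g k (n k - 1)` with `n k ≥ 2`, so by concavity
`g k b - g k (n k) ≤ c * (b - n k)` for all `b ≥ 1`. Summing over `k` for an allocation `n'`
with the same total, the right-hand sides add up to `0`.
-/

open Finset

section DiscreteConcave

variable {f : ℕ → ℝ} (hf : ∀ t, 1 ≤ t → f (t + 2) - f (t + 1) ≤ f (t + 1) - f t)
include hf

theorem marginal_antitone {a b : ℕ} (ha : 1 ≤ a) (hab : a ≤ b) :
    f (b + 1) - f b ≤ f (a + 1) - f a := by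
  induction b, hab using Nat.le_induction with
  | base => exact le_rfl
  | succ t hat ih => exact (hf t (ha.trans hat)).trans ih

theorem sub_le_mul_marginal {a b : ℕ} (ha : 1 ≤ a) (hab : a ≤ b) :
    f b - f a ≤ ((b : ℝ) - a) * (f (a + 1) - f a) := by
  induction b, hab using Nat.le_induction with
  | base => simp
  | succ t hat ih =>
    have := marginal_antitone hf ha hat
    push_cast
    linarith

theorem mul_marginal_le_sub {b c : ℕ} (hb : 1 ≤ b) (hbc : b ≤ c) :
    ((c : ℝ) + 1 - b) * (f (c + 1) - f c) ≤ f (c + 1) - f b := by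
  induction c, hbc using Nat.le_induction with
  | base => simp
  | succ t hbt ih =>
    have hstep : f (t + 2) - f (t + 1) ≤ f (t + 1) - f t := hf t (hb.trans hbt)
    have hnonneg : (0 : ℝ) ≤ (t : ℝ) + 1 - b := by
      have : (b : ℝ) ≤ t := by exact_mod_cast hbt
      linarith
    push_cast
    nlinarith [mul_le_mul_of_nonneg_left hstep hnonneg]

theorem sub_le_mul_sub_of_marginal {a b : ℕ} (ha : 1 ≤ a) (hb : 1 ≤ b) {c : ℝ}
    (hgain : f (a + 1) - f a ≤ c) (hloss : 2 ≤ a → c ≤ f a - f (a - 1)) :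
    f b - f a ≤ c * ((b : ℝ) - a) := by
  rcases le_or_gt a b with hab | hba
  · have hnonneg : (0 : ℝ) ≤ (b : ℝ) - a := sub_nonneg.mpr (by exact_mod_cast hab)
    nlinarith [sub_le_mul_marginal hf ha hab, mul_le_mul_of_nonneg_left hgain hnonneg]
  · obtain ⟨a', rfl⟩ : ∃ a', a = a' + 1 := ⟨a - 1, by omega⟩
    have hloss' : c ≤ f (a' + 1) - f a' := by simpa using hloss (by omega)
    have hnonneg : (0 : ℝ) ≤ (a' : ℝ) + 1 - b := by
      have : (b : ℝ) ≤ a' := by exact_mod_cast Nat.lt_succ_iff.mp hba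
      linarith
    push_cast
    nlinarith [mul_marginal_le_sub hf hb (Nat.lt_succ_iff.mp hba),
      mul_le_mul_of_nonneg_left hloss' hnonneg]

end DiscreteConcave

theorem sum_le_sum_of_common_supergradient {ι : Type*} [Fintype ι] (g : ι → ℕ → ℝ)
    (n n' : ι → ℕ) (hsum : ∑ k, n' k = ∑ k, n k) (c : ℝ)
    (hc : ∀ k, g k (n' k) - g k (n k) ≤ c * ((n' k : ℝ) - n k)) :
    ∑ k, g k (n' k) ≤ ∑ k, g k (n k) := by
  have hsumℝ : ∑ k, (n' k : ℝ) = ∑ k, (n k : ℝ) := by exact_mod_cast hsum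
  have : ∑ k, (g k (n' k) - g k (n k)) ≤ ∑ k, c * ((n' k : ℝ) - n k) :=
    sum_le_sum fun k _ => hc k
  rw [sum_sub_distrib, ← mul_sum, sum_sub_distrib, hsumℝ, sub_self, mul_zero] at this
  linarith

theorem local_opt_implies_global_opt_general (m N : ℕ) (hm : 0 < m)
    (w : Fin m → ℝ) (hw : ∀ k, 0 < w k)
    (F : Fin m → ℕ → ℝ)
    (hconc : ∀ k, ∀ t : ℕ, 1 ≤ t → F k (t + 2) - F k (t + 1) ≤ F k (t + 1) - F k t)
    (n : Fin m → ℕ) (hn1 : ∀ k, 1 ≤ n k) (hnN : ∑ k, n k = N)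
    (hlocal : ∀ i j : Fin m, i ≠ j → 2 ≤ n i →
      w j * (F j (n j + 1) - F j (n j)) ≤ w i * (F i (n i) - F i (n i - 1))) :
    ∀ n' : Fin m → ℕ, (∀ k, 1 ≤ n' k) → ∑ k, n' k = N →
      ∑ k, w k * F k (n' k) ≤ ∑ k, w k * F k (n k) := by
  intro n' hn'1 hn'N
  set g : Fin m → ℕ → ℝ := fun k t => w k * F k t
  have hgconc : ∀ k, ∀ t : ℕ, 1 ≤ t → g k (t + 2) - g k (t + 1) ≤ g k (t + 1) - g k t :=
    fun k t ht => by simpa only [g, ← mul_sub] using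
      mul_le_mul_of_nonneg_left (hconc k t ht) (hw k).le
  have hne : (univ : Finset (Fin m)).Nonempty :=
    univ_nonempty_iff.mpr (Fin.pos_iff_nonempty.mp hm)
  set c := univ.sup' hne fun j => g j (n j + 1) - g j (n j)
  have hgain : ∀ k, g k (n k + 1) - g k (n k) ≤ c := fun k =>
    le_sup' (fun j => g j (n j + 1) - g j (n j)) (mem_univ k)
  have hloss : ∀ k, 2 ≤ n k → c ≤ g k (n k) - g k (n k - 1) := by
    intro k hk
    refine sup'_le _ _ fun j _ => ?_
    rcases eq_or_ne k j with rfl | hkj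
    · simpa [show n k - 1 + 1 = n k by omega, show n k - 1 + 2 = n k + 1 by omega] using
        hgconc k (n k - 1) (by omega)
    · simpa only [g, ← mul_sub] using hlocal k j hkj hk
  exact sum_le_sum_of_common_supergradient g n n' (hn'N.trans hnN.symm) c fun k =>
    sub_le_mul_sub_of_marginal (hgconc k) (hn1 k) (hn'1 k) (hgain k) (hloss k)

/-- Local optimality with respect to single-agent transfers implies global
optimality for the separable concave allocation problem. -/
theorem local_opt_implies_global_opt (m N : ℕ) (hm : 0 < m)
    (w : Fin m → ℝ) (hw : ∀ k, 0 < w k)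
    (F : Fin m → ℕ → ℝ) (hF : ∀ k, StrictMono (F k))
    (hconc : ∀ k, ∀ t : ℕ, 1 ≤ t → F k (t + 2) - F k (t + 1) ≤ F k (t + 1) - F k t)
    (n : Fin m → ℕ) (hn1 : ∀ k, 1 ≤ n k) (hnN : ∑ k, n k = N)
    (hlocal : ∀ i j : Fin m, i ≠ j → 2 ≤ n i →
      w j * (F j (n j + 1) - F j (n j)) ≤ w i * (F i (n i) - F i (n i - 1))) :
    ∀ n' : Fin m → ℕ, (∀ k, 1 ≤ n' k) → ∑ k, n' k = N →
      ∑ k, w k * F k (n' k) ≤ ∑ k, w k * F k (n k) :=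
  local_opt_implies_global_opt_general m N hm w hw F hconc n hn1 hnN hlocal
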